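/- arXiv:1802.09555 — 4 statements merged into one kernel-verified Lean document; each statement's English description precedes it below -/
import Mathlib

section
/- For every involutive functor (F, ν) : (C, J, j) → (C′, J′, j′), the natural transformation ν : FJ → J′F is a natural isomorphism. -/
open CategoryTheory CategoryTheory.Limits MonoidalCategory

universe w w2 v u v2 u2

/-- An involutive category: a category `C` with an endofunctor `J` and a natural
isomorphism `j : 𝟭 C ≅ J ⋙ J` satisfying `jJ = Jj`. -/
structure InvCat (C : Type u) [Category.{v} C] where
  J : C ⥤ C
  j : 𝟭 C ≅ J ⋙ J
  coh : ∀ c : C, j.hom.app (J.obj c) = J.map (j.hom.app c)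

/-!
Write `a_c = ν_{Jc}` and `b_c = J′ν_c`. The defining identity of an involutive functor says that
`a_c ≫ b_c = (F j_c)⁻¹ ≫ j′_{Fc}` is an isomorphism, so `a_c` is a split mono and `b_c` a split
epi. Since `J′ ⋙ J′ ≅ 𝟭`, the functor `J′` is an equivalence, so every `ν_c` is a split epi; in
particular `a_c` is a split epi and a split mono, hence an isomorphism. Then so is `b_c`, and
`J′` reflects this to `ν_c`.
-/

namespace CategoryTheory

variable {C : Type u} [Category.{v} C]

theorem isSplitMono_of_isIso_comp {X Y Z : C} (f : X ⟶ Y) (g : Y ⟶ Z) [IsIso (f ≫ g)] :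
    IsSplitMono f :=
  IsSplitMono.mk' ⟨g ≫ inv (f ≫ g), by rw [← Category.assoc, IsIso.hom_inv_id]⟩

theorem isSplitEpi_of_isIso_comp {X Y Z : C} (f : X ⟶ Y) (g : Y ⟶ Z) [IsIso (f ≫ g)] :
    IsSplitEpi g :=
  IsSplitEpi.mk' ⟨inv (f ≫ g) ≫ f, by rw [Category.assoc, IsIso.inv_hom_id]⟩

theorem NatTrans.isIso_of_isIso_app_obj_comp_map_app {D : Type u2} [Category.{v2} D]
    {J : C ⥤ C} {F : C ⥤ D} {K : D ⥤ D} [K.Full] [K.Faithful] (ν : J ⋙ F ⟶ F ⋙ K)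
    (h : ∀ c, IsIso (ν.app (J.obj c) ≫ K.map (ν.app c))) : IsIso ν := by
  have isSplitEpi_app (c : C) : IsSplitEpi (ν.app c) :=
    (K.isSplitEpi_iff _).mp (isSplitEpi_of_isIso_comp (ν.app (J.obj c)) _)
  have isIso_app_obj (c : C) : IsIso (ν.app (J.obj c)) :=
    have := isSplitMono_of_isIso_comp (ν.app (J.obj c)) (K.map (ν.app c))
    isIso_of_mono_of_isSplitEpi _
  have isIso_app (c : C) : IsIso (ν.app c) :=
    have := IsIso.of_isIso_comp_left (ν.app (J.obj c)) (K.map (ν.app c))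
    isIso_of_reflects_iso _ K
  exact NatIso.isIso_of_isIso_app ν

end CategoryTheory

instance InvCat.isEquivalence_J {C : Type u} [Category.{v} C] (I : InvCat C) :
    I.J.IsEquivalence :=
  (CategoryTheory.Equivalence.mk I.J I.J I.j I.j.symm).isEquivalence_functor

/-- For every involutive functor `(F, ν) : (C, J, j) → (C′, J′, j′)`, the natural
transformation `ν : FJ → J′F` is a natural isomorphism. -/
theorem involutiveFunctor_nu_isIso {C : Type u} {D : Type u2} [Category.{v} C] [Category.{v2} D]
    (I : InvCat C) (I' : InvCat D) (F : C ⥤ D) (ν : I.J ⋙ F ⟶ F ⋙ I'.J)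
    (hν : ∀ c : C,
      F.map (I.j.hom.app c) ≫ ν.app (I.J.obj c) ≫ I'.J.map (ν.app c) = I'.j.hom.app (F.obj c)) :
    IsIso ν := by
  refine NatTrans.isIso_of_isIso_app_obj_comp_map_app ν fun c => ?_
  have composite_eq : ν.app (I.J.obj c) ≫ I'.J.map (ν.app c) =
      inv (F.map (I.j.hom.app c)) ≫ I'.j.hom.app (F.obj c) :=
    (IsIso.eq_inv_comp _).mpr (hν c)
  rw [composite_eq]
  infer_instance
end

section
/- Let (R, ρ) : (D, K, k) → (C, J, j) be an involutive functor and suppose L : C → D is left adjoint to R with unit η and counit ε. Define λ : LJ → KL as the composite λ = (εKL) ∘ (Lρ⁻¹L) ∘ (LJη). Then (L, λ) is an involutive functor and the adjunction L ⊣ R is an involutive adjunction, i.e., η and ε are involutive natural transformations. -/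
open CategoryTheory CategoryTheory.Limits MonoidalCategory

universe w w2 v u v2 u2

/-!
The composite `λ = (εKL) ∘ (Lρ⁻¹L) ∘ (LJη)` is the mate of `ρ⁻¹ : RJ → KR` under `L ⊣ R`, and
the unit and counit conditions are just the two transposition identities for mates. For the
coherence of `(L, λ)`, transpose both sides under `L ⊣ R`: transposing `λ` twice turns
`L j ≫ λJ ≫ K λ` into `j ≫ J (J η ≫ ρ⁻¹L) ≫ ρ⁻¹KL`, and solving the coherence of `(R, ρ)`
for `R k` turns `k L` into the same morphism.
-/

section Mates

variable {A : Type*} {B : Type*} {E : Type*} {F : Type*}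
  [Category A] [Category B] [Category E] [Category F]
  {G : A ⥤ E} {H : B ⥤ F} {L₁ : A ⥤ B} {R₁ : B ⥤ A} {L₂ : E ⥤ F} {R₂ : F ⥤ E}
  (adj₁ : L₁ ⊣ R₁) (adj₂ : L₂ ⊣ R₂) (ρ : H ⋙ R₂ ⟶ R₁ ⋙ G) [IsIso ρ]

lemma mateEquiv_symm_app (β : R₁ ⋙ G ⟶ H ⋙ R₂) (c : A) :
    ((mateEquiv adj₁ adj₂).symm β).app c =
      L₂.map (G.map (adj₁.unit.app c)) ≫ L₂.map (β.app (L₁.obj c)) ≫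
        adj₂.counit.app (H.obj (L₁.obj c)) := by
  simp [mateEquiv]

lemma map_unit_app_eq_mateEquiv_symm_inv (c : A) :
    G.map (adj₁.unit.app c) =
      adj₂.unit.app (G.obj c) ≫ R₂.map (((mateEquiv adj₁ adj₂).symm (inv ρ)).app c) ≫
        ρ.app (L₁.obj c) := by
  rw [← reassoc_of% unit_mateEquiv_symm adj₁ adj₂ (inv ρ) c]
  simp

lemma map_comp_mateEquiv_symm_inv_comp_counit (d : B) :
    L₂.map (ρ.app d) ≫ ((mateEquiv adj₁ adj₂).symm (inv ρ)).app (R₁.obj d) ≫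
        H.map (adj₁.counit.app d) = adj₂.counit.app (H.obj d) := by
  rw [← mateEquiv_counit_symm adj₁ adj₂ (inv ρ) d]
  simp

end Mates

section Involutive

variable {C : Type*} {D : Type*} [Category C] [Category D]

/-- The coherence axiom forces `φ` to be an isomorphism, so this is not assumed separately. -/
def IsInvolutiveFunctor (IC : InvCat C) (ID : InvCat D) (F : C ⥤ D)
    (φ : IC.J ⋙ F ⟶ F ⋙ ID.J) : Prop :=
  ∀ c : C,
    F.map (IC.j.hom.app c) ≫ φ.app (IC.J.obj c) ≫ ID.J.map (φ.app c) = ID.j.hom.app (F.obj c)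

variable {IC : InvCat C} {ID : InvCat D}

lemma IsInvolutiveFunctor.map_j_hom_app {R : D ⥤ C} {ρ : ID.J ⋙ R ⟶ R ⋙ IC.J} [IsIso ρ]
    (hρ : IsInvolutiveFunctor ID IC R ρ) (d : D) :
    R.map (ID.j.hom.app d) =
      IC.j.hom.app (R.obj d) ≫ IC.J.map ((inv ρ).app d) ≫ (inv ρ).app (ID.J.obj d) := by
  rw [← hρ d]
  simp

lemma isInvolutiveFunctor_mateEquiv_symm_inv {R : D ⥤ C} {ρ : ID.J ⋙ R ⟶ R ⋙ IC.J} [IsIso ρ]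
    (hρ : IsInvolutiveFunctor ID IC R ρ) {L : C ⥤ D} (adj : L ⊣ R) :
    IsInvolutiveFunctor IC ID L ((mateEquiv adj adj).symm (inv ρ)) := by
  set lam : IC.J ⋙ L ⟶ L ⋙ ID.J := (mateEquiv adj adj).symm (inv ρ)
  have transpose (c : C) : adj.unit.app (IC.J.obj c) ≫ R.map (lam.app c) =
      IC.J.map (adj.unit.app c) ≫ (inv ρ).app (L.obj c) :=
    (unit_mateEquiv_symm adj adj (inv ρ) c).symm
  have inv_ρ_naturality {d d' : D} (f : d ⟶ d') :
      (inv ρ).app d ≫ R.map (ID.J.map f) = IC.J.map (R.map f) ≫ (inv ρ).app d' :=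
    ((inv ρ).naturality f).symm
  have j_naturality {c c' c'' : C} (f : c ⟶ c') (g : IC.J.obj (IC.J.obj c') ⟶ c'') :
      f ≫ IC.j.hom.app c' ≫ g = IC.j.hom.app c ≫ IC.J.map (IC.J.map f) ≫ g :=
    IC.j.hom.naturality_assoc f g
  intro c
  apply (adj.homEquiv _ _).injective
  simp only [Adjunction.homEquiv_unit]
  calc adj.unit.app c ≫
        R.map (L.map (IC.j.hom.app c) ≫ lam.app (IC.J.obj c) ≫ ID.J.map (lam.app c))
      = IC.j.hom.app c ≫ (adj.unit.app (IC.J.obj (IC.J.obj c)) ≫ R.map (lam.app (IC.J.obj c))) ≫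
          R.map (ID.J.map (lam.app c)) := by
        simp only [Functor.map_comp, Category.assoc]
        exact (adj.unit.naturality_assoc (IC.j.hom.app c) _).symm
    _ = IC.j.hom.app c ≫ IC.J.map (adj.unit.app (IC.J.obj c) ≫ R.map (lam.app c)) ≫
          (inv ρ).app (ID.J.obj (L.obj c)) := by
        rw [transpose, Category.assoc, inv_ρ_naturality, IC.J.map_comp, Category.assoc]
        rfl
    _ = adj.unit.app c ≫ R.map (ID.j.hom.app (L.obj c)) := by
        rw [transpose, hρ.map_j_hom_app, IC.J.map_comp, Category.assoc]
        exact (j_naturality (adj.unit.app c) _).symm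

end Involutive

/-- Given an involutive functor `(R, ρ) : (D, K, k) → (C, J, j)` and a left adjoint
`L ⊣ R` with unit `η` and counit `ε`, the natural transformation
`λ = (εKL) ∘ (Lρ⁻¹L) ∘ (LJη) : LJ → KL` makes `(L, λ)` an involutive functor, and the
adjunction `L ⊣ R` becomes an involutive adjunction: `η` and `ε` are involutive
natural transformations. (Note `ρ` is automatically invertible.) -/
theorem involutive_adjunction {C : Type u} {D : Type u2} [Category.{v} C] [Category.{v2} D]
    (IC : InvCat C) (ID : InvCat D) (R : D ⥤ C) (ρ : ID.J ⋙ R ⟶ R ⋙ IC.J)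
    (hρ : ∀ d : D,
      R.map (ID.j.hom.app d) ≫ ρ.app (ID.J.obj d) ≫ IC.J.map (ρ.app d) = IC.j.hom.app (R.obj d))
    [IsIso ρ] (L : C ⥤ D) (adj : L ⊣ R) :
    ∃ lam : IC.J ⋙ L ⟶ L ⋙ ID.J,
      (∀ c : C, lam.app c =
          L.map (IC.J.map (adj.unit.app c)) ≫ L.map ((inv ρ).app (L.obj c)) ≫
            adj.counit.app (ID.J.obj (L.obj c))) ∧
      -- (L, λ) is an involutive functor
      (∀ c : C,
        L.map (IC.j.hom.app c) ≫ lam.app (IC.J.obj c) ≫ ID.J.map (lam.app c) =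
          ID.j.hom.app (L.obj c)) ∧
      -- the unit η is an involutive natural transformation
      (∀ c : C,
        IC.J.map (adj.unit.app c) =
          adj.unit.app (IC.J.obj c) ≫ R.map (lam.app c) ≫ ρ.app (L.obj c)) ∧
      -- the counit ε is an involutive natural transformation
      (∀ d : D,
        L.map (ρ.app d) ≫ lam.app (R.obj d) ≫ ID.J.map (adj.counit.app d) =
          adj.counit.app (ID.J.obj d)) :=
  ⟨(mateEquiv adj adj).symm (inv ρ), mateEquiv_symm_app adj adj (inv ρ),
    isInvolutiveFunctor_mateEquiv_symm_inv hρ adj,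
    map_unit_app_eq_mateEquiv_symm_inv adj adj ρ,
    map_comp_mateEquiv_symm_inv_comp_counit adj adj ρ⟩
end

section
/- The involutive symmetric monoidal category (Σ_𝔠, Rev, id) of 𝔠-profiles with order-reversal as involutive structure is isomorphic, as an involutive symmetric monoidal category, to the trivial involutive symmetric monoidal category (Σ_𝔠, Id, id). The isomorphism is induced by the section ρ sending a profile c = (c₁,…,cₙ) to the ∗-object given by the order-reversal permutation ρₙ : c → cρₙ. -/
open CategoryTheory MonoidalCategory

universe w v u

/-- The groupoid `Σ_𝔠` of `𝔠`-profiles: objects are finite sequences in `𝔠` (encoded as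
`⟨n, f : Fin n → 𝔠⟩`) and morphisms are right permutations `σ : c → cσ`. -/
def Profile (S : Type w) : Type w := Σ n : ℕ, Fin n → S

/-- A morphism of profiles `a ⟶ b` is a permutation `σ` with `b = aσ`. -/
@[ext]
structure ProfileHom {S : Type w} (a b : Profile S) where
  σ : Fin b.1 ≃ Fin a.1
  comm : a.2 ∘ σ = b.2

instance (S : Type w) : Category (Profile S) where
  Hom := ProfileHom
  id a := ⟨Equiv.refl _, rfl⟩
  comp f g :=
    ⟨g.σ.trans f.σ, by
      funext x
      exact (congrFun f.comm (g.σ x)).trans (congrFun g.comm x)⟩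
  id_comp f := ProfileHom.ext (Equiv.trans_refl f.σ)
  comp_id f := ProfileHom.ext (Equiv.refl_trans f.σ)
  assoc f g h := ProfileHom.ext (Equiv.trans_assoc h.σ g.σ f.σ).symm

@[simp] lemma Profile.id_σ {S : Type w} (a : Profile S) :
    (𝟙 a : a ⟶ a).σ = Equiv.refl _ := rfl

@[simp] lemma Profile.comp_σ {S : Type w} {a b c : Profile S} (f : a ⟶ b) (g : b ⟶ c) :
    (f ≫ g).σ = g.σ.trans f.σ := rfl

/-- Concatenation of profiles (the tensor product of `Σ_𝔠`). -/
def ptensor {S : Type w} (a b : Profile S) : Profile S :=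
  ⟨a.1 + b.1, Fin.append a.2 b.2⟩

/-- Concatenation of morphisms of profiles. -/
def ptensorHom {S : Type w} {a a' b b' : Profile S} (f : a ⟶ a') (g : b ⟶ b') :
    ptensor a b ⟶ ptensor a' b' where
  σ := (finSumFinEquiv.symm.trans (f.σ.sumCongr g.σ)).trans finSumFinEquiv
  comm := by
    funext x
    dsimp only [ptensor] at x ⊢
    simp only [Equiv.trans_apply, Function.comp_apply]
    refine Fin.addCases (fun i => ?_) (fun j => ?_) x
    · show Fin.append a.2 b.2 (finSumFinEquiv ((f.σ.sumCongr g.σ) (finSumFinEquiv.symm (Fin.castAdd b'.1 i)))) = _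
      rw [finSumFinEquiv_symm_apply_castAdd]
      simp [Fin.append_left]
      exact congrFun f.comm i
    · show Fin.append a.2 b.2 (finSumFinEquiv ((f.σ.sumCongr g.σ) (finSumFinEquiv.symm (Fin.natAdd a'.1 j)))) = _
      rw [finSumFinEquiv_symm_apply_natAdd]
      simp [Fin.append_right]
      exact congrFun g.comm j

/-- The empty profile (the tensor unit of `Σ_𝔠`). -/
def punit (S : Type w) : Profile S := ⟨0, Fin.elim0⟩

/-- The order-reversal endofunctor `Rev` of `Σ_𝔠`. -/
def RevF (S : Type w) : Profile S ⥤ Profile S where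
  obj a := ⟨a.1, a.2 ∘ Fin.rev⟩
  map {a b} f :=
    ⟨(Fin.revPerm.trans f.σ).trans Fin.revPerm, by
      funext x
      simp only [Function.comp_apply, Equiv.trans_apply, Fin.revPerm_apply, Fin.rev_rev]
      exact congrFun f.comm (Fin.revPerm x)⟩
  map_id a := ProfileHom.ext (Equiv.ext fun x => by simp [Fin.rev_rev]; rfl)
  map_comp f g := ProfileHom.ext (Equiv.ext fun x => by
    show (f.σ (g.σ x.rev)).rev = Fin.rev (f.σ (Fin.rev (Fin.rev (g.σ (Fin.rev x)))))
    rw [Fin.rev_rev])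

/-- The monoidal structure `Rev₂` on the order-reversal functor: the block transposition
`Rev(c) ⊗ Rev(d) ⟶ Rev(c ⊗ d)`. -/
def Rev2 {S : Type w} (a b : Profile S) :
    ptensor ((RevF S).obj a) ((RevF S).obj b) ⟶ (RevF S).obj (ptensor a b) where
  σ := (finCongr (Nat.add_comm a.1 b.1)).trans
    ((finSumFinEquiv.symm.trans ((Equiv.sumComm (Fin b.1) (Fin a.1)).trans
      finSumFinEquiv)))
  comm := by
    funext x
    dsimp only [ptensor, RevF] at x ⊢
    show Fin.append (a.2 ∘ Fin.rev) (b.2 ∘ Fin.rev) (finSumFinEquiv ((Equiv.sumComm (Fin b.1) (Fin a.1)) (finSumFinEquiv.symm (Fin.cast (Nat.add_comm a.1 b.1) x)))) = (Fin.append a.2 b.2) x.rev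
    rcases h : finSumFinEquiv.symm (Fin.cast (Nat.add_comm a.1 b.1) x) with i | j
    · have h2 : Fin.cast (Nat.add_comm a.1 b.1) x = Fin.castAdd a.1 i := by
        simpa using congrArg finSumFinEquiv h
      have hv : (x : ℕ) = (i : ℕ) := congrArg Fin.val h2
      have hx : x.rev = Fin.natAdd a.1 i.rev := by
        apply Fin.ext
        simp [Fin.rev, hv]
        omega
      simp only [Equiv.sumComm_apply, Sum.swap_inl, finSumFinEquiv_apply_right, hx,
        Fin.append_right, Function.comp_apply]
    · have h2 : Fin.cast (Nat.add_comm a.1 b.1) x = Fin.natAdd b.1 j := by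
        simpa using congrArg finSumFinEquiv h
      have hv : (x : ℕ) = b.1 + (j : ℕ) := congrArg Fin.val h2
      have hx : x.rev = Fin.castAdd b.1 j.rev := by
        apply Fin.ext
        have := j.isLt
        simp [Fin.rev, hv]
        omega
      simp only [Equiv.sumComm_apply, Sum.swap_inr, finSumFinEquiv_apply_left, hx,
        Fin.append_left, Function.comp_apply]

/-- The canonical ∗-object structure (the section `ρ`) on a profile, given by the
order-reversal permutation `ρₙ : c ⟶ cρₙ`. -/
def rhoSection {S : Type w} (a : Profile S) : a ⟶ (RevF S).obj a :=
  ⟨Fin.revPerm, rfl⟩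

/-- The identification `𝟭 ≅ Rev ⋙ Rev` (the involutive structure `j = id` of the paper,
which in this encoding is the canonical natural isomorphism). -/
def revrev (S : Type w) : 𝟭 (Profile S) ≅ RevF S ⋙ RevF S :=
  NatIso.ofComponents
    (fun a => by
      refine ⟨⟨Equiv.refl _, ?_⟩, ⟨Equiv.refl _, ?_⟩, ?_, ?_⟩
      · funext x; exact congrArg a.2 (Fin.rev_rev x).symm
      · funext x; exact congrArg a.2 (Fin.rev_rev x)
      · exact ProfileHom.ext rfl
      · exact ProfileHom.ext rfl)
    (fun f => ProfileHom.ext (Equiv.ext fun x => by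
      show f.σ x = Fin.rev (Fin.rev (f.σ (Fin.rev (Fin.rev x))))
      exact ((Fin.rev_rev _).trans (congrArg f.σ (Fin.rev_rev x))).symm))

/-! The order-reversal permutations `ρₙ` are involutions, so `ρ_c : c ⟶ Rev c` is an
isomorphism, natural in `c`, and `ρ ≫ Rev ρ` is the identity permutation. Compatibility with
`Rev₂` is the fact that reversing a concatenation `c ⊗ d` is the same as swapping the two
blocks and then reversing each block separately. -/

theorem Fin.finAddFlip_trans_sumCongr_revPerm (m n : ℕ) :
    (finCongr (Nat.add_comm m n)).trans (finAddFlip.trans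
      ((finSumFinEquiv.symm.trans (Fin.revPerm.sumCongr Fin.revPerm)).trans finSumFinEquiv)) =
      Fin.revPerm := by
  ext x
  obtain ⟨i, rfl⟩ := (finCongr (Nat.add_comm n m)).surjective x
  induction i using Fin.addCases <;> simp [Fin.val_rev] <;> omega

namespace Profile

variable {S : Type w}

def rhoIso (a : Profile S) : a ≅ (RevF S).obj a where
  hom := rhoSection a
  inv := ⟨Fin.revPerm, funext fun x => congrArg a.2 (Fin.rev_rev x)⟩
  hom_inv_id := ProfileHom.ext (Equiv.ext Fin.rev_rev)
  inv_hom_id := ProfileHom.ext (Equiv.ext Fin.rev_rev)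

theorem rhoSection_naturality {a b : Profile S} (f : a ⟶ b) :
    f ≫ rhoSection b = rhoSection a ≫ (RevF S).map f :=
  ProfileHom.ext (Equiv.ext fun x => (Fin.rev_rev (f.σ x.rev)).symm)

variable (S) in
def rhoNatIso : 𝟭 (Profile S) ≅ RevF S :=
  NatIso.ofComponents rhoIso rhoSection_naturality

theorem rhoSection_comp_map_rhoSection (a : Profile S) :
    rhoSection a ≫ (RevF S).map (rhoSection a) = (revrev S).hom.app a :=
  ProfileHom.ext (Equiv.ext fun x => (Fin.rev_rev _).trans (Fin.rev_rev x))

theorem ptensorHom_rhoSection_comp_Rev2 (a b : Profile S) :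
    ptensorHom (rhoSection a) (rhoSection b) ≫ Rev2 a b = rhoSection (ptensor a b) :=
  ProfileHom.ext (Fin.finAddFlip_trans_sumCongr_revPerm a.1 b.1)

end Profile

/-- The involutive symmetric monoidal category `(Σ_𝔠, Rev, id)` of `𝔠`-profiles with
order-reversal is isomorphic to the trivial involutive symmetric monoidal category
`(Σ_𝔠, Id, id)`: the order-reversal permutations `ρₙ : c ⟶ cρₙ` (the monoidal section `ρ`
of the forgetful functor) assemble into a monoidal natural isomorphism `α : 𝟭 ≅ Rev`
compatible with the involutive structures, i.e. `(𝟭, α)` is an invertible involutive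
symmetric monoidal functor. -/
theorem profile_rev_trivialization (S : Type w) :
    ∃ α : 𝟭 (Profile S) ≅ RevF S,
      -- the components of `α` are the order-reversal permutations (the section `ρ`):
      (∀ a : Profile S, α.hom.app a = rhoSection a) ∧
      -- `(𝟭, α)` is an involutive functor from the trivial involutive structure:
      (∀ a : Profile S,
        α.hom.app a ≫ (RevF S).map (α.hom.app a) = (revrev S).hom.app a) ∧
      -- `α` is compatible with the (symmetric) monoidal structures `Rev₂` ...
      (∀ a b : Profile S,
        ptensorHom (α.hom.app a) (α.hom.app b) ≫ Rev2 a b = α.hom.app (ptensor a b)) ∧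
      -- ... and `Rev₀ = id`:
      ((α.hom.app (punit S)).σ = Equiv.refl _) :=
  ⟨Profile.rhoNatIso S, fun _ => rfl, Profile.rhoSection_comp_map_rhoSection,
    Profile.ptensorHom_rhoSection_comp_Rev2,
    Equiv.ext fun x => x.elim0⟩
end

section
/- Let (M, J, j) be an involutive symmetric monoidal category, (A, μ, η, ∗) an order-reversing ∗-monoid (i.e., ∗ ∘ μ = J(μ^op) ∘ J₂ ∘ (∗ ⊗ ∗), where μ^op = μ ∘ τ, plus the unit compatibility ∗ ∘ η = J(η) ∘ J₀ and the ∗-object condition J(∗) ∘ ∗ = j_A), and ω : A → I a state, i.e., a morphism of ∗-objects from (∗ : A → JA) to (J₀ : I → JI). Then the composite ⟨·,·⟩ = ω ∘ μ ∘ (∗⁻¹ ⊗ id) : JA ⊗ A → I defines an inner product on A, and the multiplication μ : A ⊗ A → A defines a ∗-representation of A on the inner product space (A, ⟨·,·⟩). -/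
/-!
The GNS inner product is `ω` applied after `m := μ ∘ (∗⁻¹ ⊗ id) : JA ⊗ A ⟶ A`. Because `J` is
symmetric and `∗` reverses the order of multiplication, `m` is itself a ∗-morphism from the
canonical ∗-object `JA ⊗ A` to `(A, ∗)`, so composing with the state `ω` gives a ∗-morphism to
`(I, J₀)`. The ∗-representation identity is associativity of `μ`, after moving `∗⁻¹` across `μ`
by the same order-reversal identity.
-/

open CategoryTheory CategoryTheory.Limits MonoidalCategory

universe w w2 v u v2 u2

/-- An involutive monoidal category (in the sense of Jacobs): a monoidal category `C`,
a lax monoidal endofunctor `J = (J, μJ, εJ)` and a monoidal natural isomorphism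
`j : 𝟭 C ≅ J ⋙ J` satisfying `jJ = Jj`. -/
structure InvMonCat (C : Type u) [Category.{v} C] [MonoidalCategory C] where
  /-- the involution endofunctor -/
  J : C ⥤ C
  /-- the unit structure morphism `J₀ : I ⟶ JI` -/
  εJ : 𝟙_ C ⟶ J.obj (𝟙_ C)
  /-- the tensorator `J₂` -/
  μJ : ∀ X Y : C, J.obj X ⊗ J.obj Y ⟶ J.obj (X ⊗ Y)
  μJ_natural : ∀ {X Y X' Y' : C} (f : X ⟶ Y) (g : X' ⟶ Y'),
    (J.map f ⊗ₘ J.map g) ≫ μJ Y Y' = μJ X X' ≫ J.map (f ⊗ₘ g)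
  associativity : ∀ X Y Z : C,
    (μJ X Y ⊗ₘ 𝟙 (J.obj Z)) ≫ μJ (X ⊗ Y) Z ≫ J.map (α_ X Y Z).hom =
      (α_ (J.obj X) (J.obj Y) (J.obj Z)).hom ≫ (𝟙 (J.obj X) ⊗ₘ μJ Y Z) ≫ μJ X (Y ⊗ Z)
  left_unitality : ∀ X : C,
    (λ_ (J.obj X)).hom = (εJ ⊗ₘ 𝟙 (J.obj X)) ≫ μJ (𝟙_ C) X ≫ J.map (λ_ X).hom
  right_unitality : ∀ X : C,
    (ρ_ (J.obj X)).hom = (𝟙 (J.obj X) ⊗ₘ εJ) ≫ μJ X (𝟙_ C) ≫ J.map (ρ_ X).hom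
  /-- the natural isomorphism `j : 𝟭 C ≅ J²` -/
  j : 𝟭 C ≅ J ⋙ J
  coh : ∀ c : C, j.hom.app (J.obj c) = J.map (j.hom.app c)
  /-- `j` is a monoidal natural transformation (tensor part) -/
  j_tensor : ∀ X Y : C,
    (j.hom.app X ⊗ₘ j.hom.app Y) ≫ μJ (J.obj X) (J.obj Y) ≫ J.map (μJ X Y) =
      j.hom.app (X ⊗ Y)
  /-- `j` is a monoidal natural transformation (unit part) -/
  j_unit : εJ ≫ J.map εJ = j.hom.app (𝟙_ C)

namespace InvMonCat

variable {C : Type u} [Category.{v} C] [MonoidalCategory C] (I : InvMonCat C)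

def IsBraided [BraidedCategory C] : Prop :=
  ∀ X Y : C, I.μJ X Y ≫ I.J.map (β_ X Y).hom = (β_ (I.J.obj X) (I.J.obj Y)).hom ≫ I.μJ Y X

def IsStarObject {X : C} (s : X ⟶ I.J.obj X) : Prop :=
  s ≫ I.J.map s = I.j.hom.app X

def IsStarHom {X Y : C} (sX : X ⟶ I.J.obj X) (sY : Y ⟶ I.J.obj Y) (f : X ⟶ Y) : Prop :=
  sX ≫ I.J.map f = f ≫ sY

variable {I}

theorem IsStarHom.comp {X Y Z : C} {sX : X ⟶ I.J.obj X} {sY : Y ⟶ I.J.obj Y}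
    {sZ : Z ⟶ I.J.obj Z} {f : X ⟶ Y} {g : Y ⟶ Z} (hf : I.IsStarHom sX sY f)
    (hg : I.IsStarHom sY sZ g) : I.IsStarHom sX sZ (f ≫ g) := by
  unfold IsStarHom at *
  rw [Functor.map_comp, reassoc_of% hf, hg, Category.assoc]

theorem j_app_comp_inv_map {X : C} {s : X ⟶ I.J.obj X} [IsIso s] (hs : I.IsStarObject s) :
    I.j.hom.app X ≫ inv (I.J.map s) = s := by
  rw [IsIso.comp_inv_eq]
  exact hs.symm

variable (I)

def conjTensorStar [BraidedCategory C] (X : C) : I.J.obj X ⊗ X ⟶ I.J.obj (I.J.obj X ⊗ X) :=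
  (β_ (I.J.obj X) X).hom ≫ (I.j.hom.app X ⊗ₘ 𝟙 (I.J.obj X)) ≫ I.μJ (I.J.obj X) X

variable {I}

theorem isStarObject_conjTensorStar [SymmetricCategory C] (hI : I.IsBraided) (X : C) :
    I.IsStarObject (I.conjTensorStar X) := by
  have swap_j : (I.j.hom.app X ⊗ₘ 𝟙 (I.J.obj X)) ≫ (β_ (I.J.obj (I.J.obj X)) (I.J.obj X)).hom =
      (β_ X (I.J.obj X)).hom ≫ (𝟙 (I.J.obj X) ⊗ₘ I.j.hom.app X) :=
    BraidedCategory.braiding_naturality _ _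
  have merge_j : (𝟙 (I.J.obj X) ⊗ₘ I.j.hom.app X) ≫
      (I.J.map (I.j.hom.app X) ⊗ₘ 𝟙 (I.J.obj (I.J.obj X))) =
      I.J.map (I.j.hom.app X) ⊗ₘ I.j.hom.app X :=
    id_tensor_comp_tensor_id _ _
  simp only [IsStarObject, conjTensorStar, Functor.map_comp, Category.assoc]
  rw [reassoc_of% (hI (I.J.obj X) X), ← reassoc_of% (I.μJ_natural (I.j.hom.app X) (𝟙 _)),
    CategoryTheory.Functor.map_id, reassoc_of% swap_j, SymmetricCategory.symmetry_assoc,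
    reassoc_of% merge_j, ← I.coh X]
  exact I.j_tensor (I.J.obj X) X

section StarMonoid

variable [SymmetricCategory C] {A : C} {mul : A ⊗ A ⟶ A} {star : A ⟶ I.J.obj A}

theorem tensorHom_star_comp_map_mul (hI : I.IsBraided)
    (h_mul : mul ≫ star = (star ⊗ₘ star) ≫ I.μJ A A ≫ I.J.map ((β_ A A).hom ≫ mul)) :
    (star ⊗ₘ star) ≫ I.μJ A A ≫ I.J.map mul = (β_ A A).hom ≫ mul ≫ star := by
  have h_mul' : mul ≫ star = (β_ A A).hom ≫ (star ⊗ₘ star) ≫ I.μJ A A ≫ I.J.map mul := by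
    rw [h_mul, Functor.map_comp, reassoc_of% (hI A A),
      ← BraidedCategory.braiding_naturality_assoc]
  rw [h_mul', SymmetricCategory.symmetry_assoc]

theorem braiding_star_comp_map_mul [IsIso star] (hI : I.IsBraided)
    (h_mul : mul ≫ star = (star ⊗ₘ star) ≫ I.μJ A A ≫ I.J.map ((β_ A A).hom ≫ mul)) :
    (β_ (I.J.obj A) A).hom ≫ (star ⊗ₘ 𝟙 (I.J.obj A)) ≫ I.μJ A A ≫ I.J.map mul =
      (inv star ⊗ₘ 𝟙 A) ≫ mul ≫ star := by
  have split : (star ⊗ₘ 𝟙 (I.J.obj A)) = (𝟙 A ⊗ₘ inv star) ≫ (star ⊗ₘ star) := by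
    rw [tensorHom_comp_tensorHom, IsIso.inv_hom_id, Category.id_comp]
  rw [split, Category.assoc, tensorHom_star_comp_map_mul hI h_mul,
    BraidedCategory.braiding_naturality_assoc, SymmetricCategory.symmetry_assoc]

theorem isStarHom_inv_tensorHom_id_comp_mul [IsIso star] (hI : I.IsBraided)
    (h_star : I.IsStarObject star)
    (h_mul : mul ≫ star = (star ⊗ₘ star) ≫ I.μJ A A ≫ I.J.map ((β_ A A).hom ≫ mul)) :
    I.IsStarHom (I.conjTensorStar A) star ((inv star ⊗ₘ 𝟙 A) ≫ mul) := by
  have j_star : (I.j.hom.app A ⊗ₘ 𝟙 (I.J.obj A)) ≫ (inv (I.J.map star) ⊗ₘ 𝟙 (I.J.obj A)) =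
      star ⊗ₘ 𝟙 (I.J.obj A) := by
    rw [tensorHom_comp_tensorHom, j_app_comp_inv_map h_star, Category.comp_id]
  simp only [IsStarHom, conjTensorStar, Functor.map_comp, Category.assoc]
  rw [← reassoc_of% (I.μJ_natural (inv star) (𝟙 A)), CategoryTheory.Functor.map_id,
    Functor.map_inv, reassoc_of% j_star, braiding_star_comp_map_mul hI h_mul]

/-- Writing `x = ∗x'`, both sides are `f (x' · a · y)`: the right side pairs
`J(μ)(J₂(∗a ⊗ x)) = ∗(x' · a)` with `y`. -/
theorem gns_left_mul_adjoint [IsIso star] (hI : I.IsBraided)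
    (h_assoc : (mul ⊗ₘ 𝟙 A) ≫ mul = (α_ A A A).hom ≫ (𝟙 A ⊗ₘ mul) ≫ mul)
    (h_mul : mul ≫ star = (star ⊗ₘ star) ≫ I.μJ A A ≫ I.J.map ((β_ A A).hom ≫ mul))
    {B : C} (f : A ⟶ B) :
    (α_ (I.J.obj A) A A).hom ≫ (𝟙 (I.J.obj A) ⊗ₘ mul) ≫ (inv star ⊗ₘ 𝟙 A) ≫ mul ≫ f =
      ((β_ (I.J.obj A) A).hom ⊗ₘ 𝟙 A) ≫ ((star ⊗ₘ 𝟙 (I.J.obj A)) ⊗ₘ 𝟙 A) ≫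
        (I.μJ A A ⊗ₘ 𝟙 A) ≫ (I.J.map mul ⊗ₘ 𝟙 A) ≫ (inv star ⊗ₘ 𝟙 A) ≫ mul ≫ f := by
  have star_inv_mul : (β_ (I.J.obj A) A).hom ≫ (star ⊗ₘ 𝟙 (I.J.obj A)) ≫ I.μJ A A ≫
      I.J.map mul ≫ inv star = (inv star ⊗ₘ 𝟙 A) ≫ mul := by
    rw [reassoc_of% (braiding_star_comp_map_mul hI h_mul), IsIso.hom_inv_id, Category.comp_id]
  have slide : (𝟙 (I.J.obj A) ⊗ₘ mul) ≫ (inv star ⊗ₘ 𝟙 A) =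
      (inv star ⊗ₘ (𝟙 A ⊗ₘ 𝟙 A)) ≫ (𝟙 A ⊗ₘ mul) := by
    simp only [tensorHom_comp_tensorHom, id_tensorHom_id, Category.id_comp, Category.comp_id]
  rw [reassoc_of% slide, ← associator_naturality_assoc, ← reassoc_of% h_assoc]
  simp only [tensorHom_comp_tensorHom_assoc, Category.comp_id]
  rw [star_inv_mul]

end StarMonoid

end InvMonCat

theorem gns_construction_general {C : Type u} [Category.{v} C] [MonoidalCategory C]
    [SymmetricCategory C] (I : InvMonCat C)
    -- `J` is a symmetric monoidal functor:
    (hbraid : ∀ X Y : C,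
      I.μJ X Y ≫ I.J.map (β_ X Y).hom = (β_ (I.J.obj X) (I.J.obj Y)).hom ≫ I.μJ Y X)
    (A : C) (mul : A ⊗ A ⟶ A) (one : 𝟙_ C ⟶ A)
    -- `(A, μ, η)` is a monoid:
    (h_assoc : (mul ⊗ₘ 𝟙 A) ≫ mul = (α_ A A A).hom ≫ (𝟙 A ⊗ₘ mul) ≫ mul)
    (h_lu : (one ⊗ₘ 𝟙 A) ≫ mul = (λ_ A).hom)
    -- `∗` is a ∗-object structure (hence invertible; `hstar_iso` is redundant but lets
    -- us form `inv star`):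
    (star : A ⟶ I.J.obj A) (h_star : star ≫ I.J.map star = I.j.hom.app A)
    (hstar_iso : IsIso star)
    -- the ∗-monoid is order-reversing:  `∗ ∘ η = J(η) ∘ J₀` and
    -- `∗ ∘ μ = J(μ^op) ∘ J₂ ∘ (∗ ⊗ ∗)` with `μ^op = μ ∘ τ`:
    (h_mul : mul ≫ star = (star ⊗ₘ star) ≫ I.μJ A A ≫ I.J.map ((β_ A A).hom ≫ mul))
    -- a state `ω : A ⟶ I`, i.e. a ∗-morphism `(∗ : A ⟶ JA) ⟶ (J₀ : I ⟶ JI)`: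
    (ω : A ⟶ 𝟙_ C) (h_ω : star ≫ I.J.map ω = ω ≫ I.εJ) :
    -- the GNS inner product:
    letI := hstar_iso
    let ip : I.J.obj A ⊗ A ⟶ 𝟙_ C := (inv star ⊗ₘ 𝟙 A) ≫ mul ≫ ω
    -- the canonical ∗-object structure on `JA ⊗ A`:
    let sV : I.J.obj A ⊗ A ⟶ I.J.obj (I.J.obj A ⊗ A) :=
      (β_ (I.J.obj A) A).hom ≫ (I.j.hom.app A ⊗ₘ 𝟙 (I.J.obj A)) ≫ I.μJ (I.J.obj A) A
    -- (1) `sV` is indeed a ∗-object structure: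
    (sV ≫ I.J.map sV = I.j.hom.app (I.J.obj A ⊗ A)) ∧
    -- (2) `ip` is an inner product, i.e. a ∗-morphism `(JA ⊗ A, sV) ⟶ (I, J₀)`:
    (sV ≫ I.J.map ip = ip ≫ I.εJ) ∧
    -- (3) `ℓ = μ` is a left module structure on `A` (the monoid axioms) ...
    ((one ⊗ₘ 𝟙 A) ≫ mul = (λ_ A).hom) ∧
    ((mul ⊗ₘ 𝟙 A) ≫ mul = (α_ A A A).hom ≫ (𝟙 A ⊗ₘ mul) ≫ mul) ∧
    -- (4) ... which is compatible with the inner product, i.e. a ∗-representation: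
    ((α_ (I.J.obj A) A A).hom ≫ (𝟙 (I.J.obj A) ⊗ₘ mul) ≫ ip =
      ((β_ (I.J.obj A) A).hom ⊗ₘ 𝟙 A) ≫ ((star ⊗ₘ 𝟙 (I.J.obj A)) ⊗ₘ 𝟙 A) ≫
        (I.μJ A A ⊗ₘ 𝟙 A) ≫ (I.J.map mul ⊗ₘ 𝟙 A) ≫ ip) := by
  intro ip sV
  have ip_isStarHom : I.IsStarHom (I.conjTensorStar A) I.εJ ((inv star ⊗ₘ 𝟙 A) ≫ mul ≫ ω) := by
    rw [← Category.assoc]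
    exact (InvMonCat.isStarHom_inv_tensorHom_id_comp_mul hbraid h_star h_mul).comp h_ω
  exact ⟨InvMonCat.isStarObject_conjTensorStar hbraid A, ip_isStarHom, h_lu, h_assoc,
    InvMonCat.gns_left_mul_adjoint hbraid h_assoc h_mul ω⟩

/-- GNS construction.  Let `(M, J, j)` be an involutive symmetric monoidal category,
`(A, μ, η, ∗)` an order-reversing ∗-monoid and `ω : A ⟶ I` a state.  Then
`⟨·,·⟩ := ω ∘ μ ∘ (∗⁻¹ ⊗ id) : JA ⊗ A ⟶ I` is an inner product on `A` and the
multiplication `μ` defines a ∗-representation of `A` on `(A, ⟨·,·⟩)`. -/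
theorem gns_construction {C : Type u} [Category.{v} C] [MonoidalCategory C]
    [SymmetricCategory C] (I : InvMonCat C)
    -- `J` is a symmetric monoidal functor:
    (hbraid : ∀ X Y : C,
      I.μJ X Y ≫ I.J.map (β_ X Y).hom = (β_ (I.J.obj X) (I.J.obj Y)).hom ≫ I.μJ Y X)
    (A : C) (mul : A ⊗ A ⟶ A) (one : 𝟙_ C ⟶ A)
    -- `(A, μ, η)` is a monoid:
    (h_assoc : (mul ⊗ₘ 𝟙 A) ≫ mul = (α_ A A A).hom ≫ (𝟙 A ⊗ₘ mul) ≫ mul)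
    (h_lu : (one ⊗ₘ 𝟙 A) ≫ mul = (λ_ A).hom)
    (h_ru : (𝟙 A ⊗ₘ one) ≫ mul = (ρ_ A).hom)
    -- `∗` is a ∗-object structure (hence invertible; `hstar_iso` is redundant but lets
    -- us form `inv star`):
    (star : A ⟶ I.J.obj A) (h_star : star ≫ I.J.map star = I.j.hom.app A)
    (hstar_iso : IsIso star)
    -- the ∗-monoid is order-reversing:  `∗ ∘ η = J(η) ∘ J₀` and
    -- `∗ ∘ μ = J(μ^op) ∘ J₂ ∘ (∗ ⊗ ∗)` with `μ^op = μ ∘ τ`: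
    (h_one : one ≫ star = I.εJ ≫ I.J.map one)
    (h_mul : mul ≫ star = (star ⊗ₘ star) ≫ I.μJ A A ≫ I.J.map ((β_ A A).hom ≫ mul))
    -- a state `ω : A ⟶ I`, i.e. a ∗-morphism `(∗ : A ⟶ JA) ⟶ (J₀ : I ⟶ JI)`:
    (ω : A ⟶ 𝟙_ C) (h_ω : star ≫ I.J.map ω = ω ≫ I.εJ) :
    -- the GNS inner product:
    letI := hstar_iso
    let ip : I.J.obj A ⊗ A ⟶ 𝟙_ C := (inv star ⊗ₘ 𝟙 A) ≫ mul ≫ ω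
    -- the canonical ∗-object structure on `JA ⊗ A`:
    let sV : I.J.obj A ⊗ A ⟶ I.J.obj (I.J.obj A ⊗ A) :=
      (β_ (I.J.obj A) A).hom ≫ (I.j.hom.app A ⊗ₘ 𝟙 (I.J.obj A)) ≫ I.μJ (I.J.obj A) A
    -- (1) `sV` is indeed a ∗-object structure:
    (sV ≫ I.J.map sV = I.j.hom.app (I.J.obj A ⊗ A)) ∧
    -- (2) `ip` is an inner product, i.e. a ∗-morphism `(JA ⊗ A, sV) ⟶ (I, J₀)`:
    (sV ≫ I.J.map ip = ip ≫ I.εJ) ∧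
    -- (3) `ℓ = μ` is a left module structure on `A` (the monoid axioms) ...
    ((one ⊗ₘ 𝟙 A) ≫ mul = (λ_ A).hom) ∧
    ((mul ⊗ₘ 𝟙 A) ≫ mul = (α_ A A A).hom ≫ (𝟙 A ⊗ₘ mul) ≫ mul) ∧
    -- (4) ... which is compatible with the inner product, i.e. a ∗-representation:
    ((α_ (I.J.obj A) A A).hom ≫ (𝟙 (I.J.obj A) ⊗ₘ mul) ≫ ip =
      ((β_ (I.J.obj A) A).hom ⊗ₘ 𝟙 A) ≫ ((star ⊗ₘ 𝟙 (I.J.obj A)) ⊗ₘ 𝟙 A) ≫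
        (I.μJ A A ⊗ₘ 𝟙 A) ≫ (I.J.map mul ⊗ₘ 𝟙 A) ≫ ip) :=
  gns_construction_general I hbraid A mul one h_assoc h_lu star h_star hstar_iso h_mul ω h_ω
end
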